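/- arXiv:1910.10512 — 3 statements merged into one kernel-verified Lean document; each statement's English description precedes it below -/
import Mathlib

section
/- In the MLVSBM, if the individual latent variables Z^I are independent of the organizational latent variables Z^O, then γ_{kl} = γ_{kl'} for all k and all l, l' ∈ {1,...,Q_O}, provided π_l > 0 for all l. -/
/-!
Summing the joint law over the individual labels leaves `∏ j, π (zO j)`, since each column
of `γ` sums to one. Evaluating the factorisation at the constant configurations `zI ≡ k`,
`zO ≡ m` and cancelling `π m ^ nO` then shows that `γ k m ^ nI` is the marginal probability
of `zI ≡ k`, which does not depend on `m`; nonnegativity lets us take `nI`-th roots.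
-/

open Finset

theorem Fintype.sum_pi_prod_eq_one {ι κ R : Type*} [Fintype ι] [DecidableEq ι] [Fintype κ]
    [CommSemiring R] (f : ι → κ → R) (hf : ∀ i, ∑ k, f i k = 1) :
    ∑ w : ι → κ, ∏ i, f i (w i) = 1 := by
  rw [← Fintype.prod_sum, Fintype.prod_eq_one _ hf]

namespace MLVSBM

variable {nI nO QI QO : ℕ} (aff : Fin nI → Fin nO) (π : Fin QO → ℝ) (γ : Fin QI → Fin QO → ℝ)

def jointLaw (zI : Fin nI → Fin QI) (zO : Fin nO → Fin QO) : ℝ :=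
  (∏ j, π (zO j)) * ∏ i, γ (zI i) (zO (aff i))

theorem sum_jointLaw_individuals (hγ1 : ∀ l, ∑ k, γ k l = 1) (zO : Fin nO → Fin QO) :
    ∑ wI, jointLaw aff π γ wI zO = ∏ j, π (zO j) := by
  simp only [jointLaw, ← mul_sum]
  rw [Fintype.sum_pi_prod_eq_one (fun i k => γ k (zO (aff i))) (fun i => hγ1 _), mul_one]

theorem jointLaw_const (k : Fin QI) (m : Fin QO) :
    jointLaw aff π γ (fun _ => k) (fun _ => m) = π m ^ nO * γ k m ^ nI := by
  simp [jointLaw]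

theorem pow_eq_marginal_of_indep (hπpos : ∀ l, 0 < π l) (hγ1 : ∀ l, ∑ k, γ k l = 1)
    (hindep : ∀ zI zO, jointLaw aff π γ zI zO
      = (∑ wO, jointLaw aff π γ zI wO) * ∑ wI, jointLaw aff π γ wI zO)
    (k : Fin QI) (m : Fin QO) :
    γ k m ^ nI = ∑ wO, jointLaw aff π γ (fun _ => k) wO := by
  have h := hindep (fun _ => k) (fun _ => m)
  rw [sum_jointLaw_individuals aff π γ hγ1, jointLaw_const] at h
  simp only [prod_const, card_univ, Fintype.card_fin] at h
  rw [mul_comm (π m ^ nO)] at h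
  exact mul_right_cancel₀ (pow_pos (hπpos m) nO).ne' h

end MLVSBM

theorem mlvsbm_indep_implies_gamma_const_general
    (nI nO QI QO : ℕ) (hnI : 0 < nI)
    (aff : Fin nI → Fin nO)
    (π : Fin QO → ℝ) (γ : Fin QI → Fin QO → ℝ)
    (hπpos : ∀ l, 0 < π l)
    (hγ0 : ∀ k l, 0 ≤ γ k l) (hγ1 : ∀ l, ∑ k, γ k l = 1)
    (P : (Fin nI → Fin QI) → (Fin nO → Fin QO) → ℝ)
    (hP : ∀ zI zO, P zI zO = (∏ j, π (zO j)) * ∏ i, γ (zI i) (zO (aff i)))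
    (hindep : ∀ zI zO, P zI zO
      = (∑ wO : Fin nO → Fin QO, P zI wO) * (∑ wI : Fin nI → Fin QI, P wI zO)) :
    ∀ k l l', γ k l = γ k l' := by
  intro k l l'
  obtain rfl : P = MLVSBM.jointLaw aff π γ := funext₂ hP
  have hpow : γ k l ^ nI = γ k l' ^ nI := by
    rw [MLVSBM.pow_eq_marginal_of_indep aff π γ hπpos hγ1 hindep,
      MLVSBM.pow_eq_marginal_of_indep aff π γ hπpos hγ1 hindep]
  exact (pow_left_inj₀ (hγ0 k l) (hγ0 k l') hnI.ne').mp hpow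

/-- In the MLVSBM, if the individual latent variables Z^I are independent of
the organizational latent variables Z^O, then γ_{kl} = γ_{kl'} for all k and all l, l',
provided π_l > 0 for all l. -/
theorem mlvsbm_indep_implies_gamma_const
    (nI nO QI QO : ℕ) (hnI : 0 < nI)
    (aff : Fin nI → Fin nO)
    (π : Fin QO → ℝ) (γ : Fin QI → Fin QO → ℝ)
    (hπpos : ∀ l, 0 < π l) (hπ1 : ∑ l, π l = 1)
    (hγ0 : ∀ k l, 0 ≤ γ k l) (hγ1 : ∀ l, ∑ k, γ k l = 1)
    (P : (Fin nI → Fin QI) → (Fin nO → Fin QO) → ℝ)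
    (hP : ∀ zI zO, P zI zO = (∏ j, π (zO j)) * ∏ i, γ (zI i) (zO (aff i)))
    (hindep : ∀ zI zO, P zI zO
      = (∑ wO : Fin nO → Fin QO, P zI wO) * (∑ wI : Fin nI → Fin QI, P wI zO)) :
    ∀ k l l', γ k l = γ k l' :=
  mlvsbm_indep_implies_gamma_const_general nI nO QI QO hnI aff π γ hπpos hγ0 hγ1 P hP hindep
end

section
/- In the SBM, define u_i = P(X_{12} = 1, X_{13} = 1, ..., X_{1,i+1} = 1) for 1 ≤ i ≤ 2Q-1 and u_0 = 1. Then u_i = Σ_{l=1}^{Q} τ_l^i π_l where τ_l = Σ_{l'} α_{ll'} π_{l'}. Consequently, the (Q+1)×Q Hankel-type matrix M with M_{ij} = u_{i+j-2} factorizes as M (restricted to its first Q rows) = R D_π R', where R is the Vandermonde matrix R_{il} = τ_l^{i-1} and D_π = diag(π). -/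
open Finset Matrix

/-! Conditionally on the class `l` of node 0, the indicators of the edges from node 0 to nodes
`1, …, i` are independent Bernoulli variables of mean `τ_l`, because the prior weight
`∏ π (z m)` factors over the nodes; summing a product of one-coordinate functions against it
gives a product of one-coordinate averages (`Fintype.prod_sum`). The Hankel factorization is then
the entrywise identity `τ^(a+b) = τ^a τ^b`. -/

theorem sum_prod_mul_prod_eq_pow {ι K R : Type*} [Fintype ι] [DecidableEq ι] [Fintype K]
    [CommSemiring R] (π β : K → R) (hπ : ∑ k, π k = 1) (S : Finset ι) :
    ∑ z : ι → K, (∏ m, π (z m)) * ∏ m ∈ S, β (z m) = (∑ k, β k * π k) ^ S.card := by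
  have factor : ∀ z : ι → K, (∏ m, π (z m)) * ∏ m ∈ S, β (z m)
      = ∏ m, (if m ∈ S then β (z m) else 1) * π (z m) := fun z => by
    rw [prod_mul_distrib, prod_ite_mem, univ_inter, mul_comm]
  have marginal : ∀ m, ∑ k, (if m ∈ S then β k else 1) * π k
      = if m ∈ S then ∑ k, β k * π k else 1 := fun m => by
    split_ifs <;> simp [hπ]
  simp_rw [factor, ← Fintype.prod_sum (fun m k => (if m ∈ S then β k else 1) * π k), marginal,
    prod_ite_mem, univ_inter, prod_const]

theorem sum_prod_mul_prod_star_eq {K R : Type*} [Fintype K] [CommSemiring R]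
    (π : K → R) (α : K → K → R) (hπ : ∑ k, π k = 1) {n i : ℕ} (h : i ≤ n) :
    ∑ z : Fin (n + 1) → K, (∏ m, π (z m)) * ∏ t : Fin i, α (z 0) (z (Fin.castLE h t).succ)
      = ∑ l, (∑ l', α l l' * π l') ^ i * π l := by
  rw [← (Fin.consEquiv fun _ => K).sum_comp, Fintype.sum_prod_type]
  refine sum_congr rfl fun l _ => ?_
  have star : ∀ w : Fin n → K, ∏ t : Fin i, α l (w (Fin.castLE h t))
      = ∏ m ∈ univ.map (Fin.castLEEmb h), α l (w m) := fun w => by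
    rw [prod_map]; rfl
  simp only [Fin.consEquiv, Equiv.coe_fn_mk, Fin.prod_univ_succ, Fin.cons_zero, Fin.cons_succ,
    star, mul_assoc, ← mul_sum]
  rw [sum_prod_mul_prod_eq_pow π (α l) hπ, card_map, card_univ, Fintype.card_fin, mul_comm]

theorem vandermonde_mul_diagonal_mul_transpose_apply {ι R : Type*} [Fintype ι] [DecidableEq ι]
    [CommSemiring R] {m : ℕ} (τ π : ι → R) (a b : Fin m) :
    ((of fun (i : Fin m) l => τ l ^ (i : ℕ)) * diagonal π
        * (of fun (i : Fin m) l => τ l ^ (i : ℕ))ᵀ) a b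
      = ∑ l, τ l ^ ((a : ℕ) + b) * π l := by
  rw [mul_apply]
  simp only [mul_diagonal, of_apply, transpose_apply, pow_add]
  exact sum_congr rfl fun l _ => by ring

/-- In the SBM, with u_i the probability that node 0 is linked to nodes
1, ..., i (and u_0 = 1), one has u_i = ∑_l τ_l^i π_l with τ_l = ∑_{l'} α_{ll'} π_{l'};
consequently the (first Q rows of the) Hankel-type matrix M_{ab} = u_{a+b} factorize as
M = R D_π Rᵀ, where R is the Vandermonde matrix R_{al} = τ_l^a and D_π = diag(π). -/
theorem sbm_hankel_factorization
    (n Q : ℕ) (hQ : 0 < Q) (hn : 2 * Q ≤ n)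
    (π : Fin Q → ℝ) (α : Fin Q → Fin Q → ℝ)
    (hπ1 : ∑ l, π l = 1)
    (u : ℕ → ℝ)
    (hu : ∀ i : ℕ, ∀ hi : i ≤ 2 * Q - 1,
      u i = ∑ z : Fin n → Fin Q,
        (∏ m, π (z m)) *
          ∏ t : Fin i, α (z ⟨0, by omega⟩) (z ⟨t.val + 1, by have := t.isLt; omega⟩)) :
    (∀ i : ℕ, i ≤ 2 * Q - 1 → u i = ∑ l, (∑ l', α l l' * π l') ^ i * π l)
    ∧ (∀ a b : Fin Q, u ((a : ℕ) + (b : ℕ))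
        = ((Matrix.of fun (i l : Fin Q) => (∑ l', α l l' * π l') ^ (i : ℕ))
            * Matrix.diagonal π
            * (Matrix.of fun (i l : Fin Q) => (∑ l', α l l' * π l') ^ (i : ℕ))ᵀ) a b) := by
  obtain ⟨n, rfl⟩ : ∃ n', n = n' + 1 := ⟨n - 1, by omega⟩
  have moments : ∀ i : ℕ, i ≤ 2 * Q - 1 → u i = ∑ l, (∑ l', α l l' * π l') ^ i * π l :=
    fun i hi => (hu i hi).trans (sum_prod_mul_prod_star_eq π α hπ1 (by omega))
  refine ⟨moments, fun a b => ?_⟩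
  rw [moments _ (by omega), vandermonde_mul_diagonal_mul_transpose_apply]
end

section
/- Let M be the (Q+1)×Q matrix with entries M_{ij} = Σ_{l=1}^Q τ_l^{i-1} π_l τ_l^{j-1}, where the τ_l are pairwise distinct and π_l > 0. Define δ_k = det(M_{-k}) where M_{-k} is M with its k-th row removed, and the polynomial B(x) = Σ_{k=0}^{Q} (-1)^{k+Q} δ_{k+1} x^k. Then B has degree exactly Q and B(τ_l) = 0 for every l = 1,...,Q; hence the roots of B are exactly τ_1,...,τ_Q. -/
open Finset Polynomial

/-!
Write `P` for the `(Q + 1) × Q` matrix `P i l = τ l ^ i`, so that `M = P * G` with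
`G = diag π * (top block of P)ᵀ`, and `G` is invertible (a Vandermonde matrix times positive
weights). Laplace expansion along the last column identifies `B.eval x` with the determinant of
`M` bordered by the column `(x ^ i)ᵢ`. For `x = τ l` this column is column `l` of `P`, hence lies
in the column space of `M = P * G`, and the bordered determinant vanishes. The leading
coefficient of `B` is the determinant of the top `Q × Q` block of `M`, which is nonzero, so `B`
has degree `Q` and its `Q` distinct roots `τ l` are all of them.
-/

theorem Polynomial.eval_eq_zero_iff_exists_of_injective {R ι : Type*} [CommRing R] [IsDomain R]
    [Fintype ι] {p : R[X]} (hp : p ≠ 0) (hdeg : p.natDegree ≤ Fintype.card ι) {f : ι → R}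
    (hf : Function.Injective f) (hroot : ∀ i, p.eval (f i) = 0) (x : R) :
    p.eval x = 0 ↔ ∃ i, f i = x := by
  refine ⟨fun hx => ?_, fun ⟨i, hi⟩ => hi ▸ hroot i⟩
  by_contra! hne
  refine hp (p.eq_zero_of_natDegree_lt_card_of_eval_eq_zero
    (f := fun o : Option ι => o.elim x f) ?_ ?_ ?_)
  · rintro (_ | i) (_ | j) h <;> simp_all [hf.eq_iff, eq_comm]
  · rintro (_ | i) <;> simp [hx, hroot]
  · simpa using Nat.lt_succ_of_le hdeg

namespace Matrix

variable {R : Type*} [CommRing R] {n : ℕ}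

noncomputable def maximalMinorPoly (M : Matrix (Fin (n + 1)) (Fin n) R) : R[X] :=
  ∑ k : Fin (n + 1), C ((-1) ^ ((k : ℕ) + n) * (M.submatrix k.succAbove id).det) * X ^ (k : ℕ)

theorem coeff_maximalMinorPoly_self (M : Matrix (Fin (n + 1)) (Fin n) R) :
    (maximalMinorPoly M).coeff n = (M.submatrix Fin.castSucc id).det := by
  simp only [maximalMinorPoly, finsetSum_coeff, coeff_C_mul_X_pow]
  rw [Finset.sum_eq_single_of_mem (Fin.last n) (mem_univ _)]
  · simp [← two_mul, pow_mul]
  · intro k _ hk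
    rw [if_neg (fun h => hk (Fin.ext h.symm))]

theorem degree_maximalMinorPoly_le (M : Matrix (Fin (n + 1)) (Fin n) R) :
    (maximalMinorPoly M).degree ≤ n :=
  Order.le_of_lt_succ (degree_sum_fin_lt _)

theorem det_of_snoc (M : Matrix (Fin (n + 1)) (Fin n) R) (v : Fin (n + 1) → R) :
    (of fun i => Fin.snoc (M i) (v i)).det =
      ∑ i : Fin (n + 1), (-1) ^ ((i : ℕ) + n) * v i * (M.submatrix i.succAbove id).det := by
  rw [det_succ_column _ (Fin.last n)]
  refine sum_congr rfl fun i _ => ?_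
  have hminor : (of fun i => Fin.snoc (M i) (v i)).submatrix i.succAbove (Fin.last n).succAbove =
      M.submatrix i.succAbove id := by
    ext a b
    simp
  rw [hminor, of_apply, Fin.snoc_last, Fin.val_last]

theorem eval_maximalMinorPoly (M : Matrix (Fin (n + 1)) (Fin n) R) (x : R) :
    (maximalMinorPoly M).eval x = (of fun i => Fin.snoc (M i) (x ^ (i : ℕ))).det := by
  simp only [det_of_snoc, maximalMinorPoly, eval_finsetSum, eval_mul, eval_C, eval_pow, eval_X]
  refine sum_congr rfl fun i _ => ?_
  ring

theorem det_of_snoc_mulVec [IsDomain R] (M : Matrix (Fin (n + 1)) (Fin n) R) (c : Fin n → R) :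
    (of fun i => Fin.snoc (M i) ((M *ᵥ c) i)).det = 0 := by
  refine exists_mulVec_eq_zero_iff.mp ⟨Fin.snoc c (-1), fun h => ?_, ?_⟩
  · simpa using congrFun h (Fin.last n)
  · ext i
    simp [mulVec, dotProduct, Fin.sum_univ_castSucc]

def powerMatrix (m : ℕ) (τ : Fin n → R) : Matrix (Fin m) (Fin n) R :=
  of fun i l => τ l ^ (i : ℕ)

theorem powerMatrix_mul_diagonal_mul_transpose (m : ℕ) (τ π : Fin n → R) :
    powerMatrix m τ * diagonal π * (powerMatrix n τ)ᵀ =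
      of fun (i : Fin m) (j : Fin n) => ∑ l, τ l ^ (i : ℕ) * π l * τ l ^ (j : ℕ) := by
  ext i j
  rw [mul_apply]
  simp only [mul_diagonal, transpose_apply, powerMatrix, of_apply]

theorem det_powerMatrix_ne_zero [IsDomain R] {τ : Fin n → R} (hτ : Function.Injective τ) :
    (powerMatrix n τ).det ≠ 0 := by
  rwa [← det_transpose, show (powerMatrix n τ)ᵀ = vandermonde τ from rfl,
    det_vandermonde_ne_zero_iff]

end Matrix

open Matrix

theorem hankel_minor_polynomial_roots_general
    (Q : ℕ) (τ π : Fin Q → ℝ)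
    (hτ : Function.Injective τ) (hπ : ∀ l, 0 < π l)
    (M : Matrix (Fin (Q + 1)) (Fin Q) ℝ)
    (hM : M = Matrix.of fun (i : Fin (Q + 1)) (j : Fin Q) => ∑ l, τ l ^ (i : ℕ) * π l * τ l ^ (j : ℕ))
    (δ : Fin (Q + 1) → ℝ)
    (hδ : ∀ k, δ k = (M.submatrix (Fin.succAbove k) id).det)
    (B : Polynomial ℝ)
    (hB : B = ∑ k : Fin (Q + 1), C ((-1) ^ ((k : ℕ) + Q) * δ k) * X ^ (k : ℕ)) :
    B.degree = Q ∧ (∀ l, B.eval (τ l) = 0) ∧ (∀ x, B.eval x = 0 ↔ ∃ l, τ l = x) := by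
  set G := diagonal π * (powerMatrix Q τ)ᵀ
  have hMG : M = powerMatrix (Q + 1) τ * G := by
    rw [hM, ← powerMatrix_mul_diagonal_mul_transpose]
    exact Matrix.mul_assoc _ _ _
  have hG : G.det ≠ 0 := by
    rw [det_mul, det_diagonal, det_transpose]
    exact mul_ne_zero (prod_ne_zero_iff.mpr fun l _ => (hπ l).ne') (det_powerMatrix_ne_zero hτ)
  have hBM : B = maximalMinorPoly M := by simp only [hB, hδ, maximalMinorPoly]
  have hdeg : B.degree = Q := by
    refine hBM ▸ degree_eq_of_le_of_coeff_ne_zero (degree_maximalMinorPoly_le M) ?_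
    rw [coeff_maximalMinorPoly_self, hMG, submatrix_mul _ _ _ _ _ Function.bijective_id,
      submatrix_id_id, det_mul]
    exact mul_ne_zero (det_powerMatrix_ne_zero hτ) hG
  have hroot (l : Fin Q) : B.eval (τ l) = 0 := by
    have hcol : M *ᵥ (G⁻¹ *ᵥ Pi.single l 1) = fun i : Fin (Q + 1) => τ l ^ (i : ℕ) := by
      rw [hMG, mulVec_mulVec, mul_nonsing_inv_cancel_right _ _ (isUnit_iff_ne_zero.mpr hG),
        mulVec_single_one]
      rfl
    rw [hBM, eval_maximalMinorPoly, ← det_of_snoc_mulVec M (G⁻¹ *ᵥ Pi.single l 1), hcol]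
  have hB0 : B ≠ 0 := by
    rintro rfl
    simp at hdeg
  refine ⟨hdeg, hroot, eval_eq_zero_iff_exists_of_injective hB0 ?_ hτ hroot⟩
  simp [natDegree_eq_of_degree_eq_some hdeg]

/-- With M the (Q+1)×Q moment matrix M_{ij} = ∑_l τ_l^{i-1} π_l τ_l^{j-1},
δ_k = det(M with k-th row removed) and B(x) = ∑_{k=0}^{Q} (-1)^{k+Q} δ_{k+1} x^k,
the polynomial B has degree exactly Q and B(τ_l) = 0 for every l; hence the roots of B
are exactly τ_1, ..., τ_Q. -/
theorem hankel_minor_polynomial_roots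
    (Q : ℕ) (hQ : 0 < Q) (τ π : Fin Q → ℝ)
    (hτ : Function.Injective τ) (hπ : ∀ l, 0 < π l)
    (M : Matrix (Fin (Q + 1)) (Fin Q) ℝ)
    (hM : M = Matrix.of fun (i : Fin (Q + 1)) (j : Fin Q) => ∑ l, τ l ^ (i : ℕ) * π l * τ l ^ (j : ℕ))
    (δ : Fin (Q + 1) → ℝ)
    (hδ : ∀ k, δ k = (M.submatrix (Fin.succAbove k) id).det)
    (B : Polynomial ℝ)
    (hB : B = ∑ k : Fin (Q + 1), C ((-1) ^ ((k : ℕ) + Q) * δ k) * X ^ (k : ℕ)) :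
    B.degree = Q ∧ (∀ l, B.eval (τ l) = 0) ∧ (∀ x, B.eval x = 0 ↔ ∃ l, τ l = x) :=
  hankel_minor_polynomial_roots_general Q τ π hτ hπ M hM δ hδ B hB
end
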